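/- Let n ≥ 1 be an integer, θ ∈ (0,1), c ≥ 1 an integer, F a finite family of nonempty subsets of {1,…,n}, and π : F → ℝ with π(S) > 0 for all S ∈ F. Let p be a schedule with p_i > 0 for every i and Σ_{z=1}^n p_z W_z(p) > 0. If the WIGGINS update leaves p unchanged, i.e., p_i W_i(p) / (Σ_{z=1}^n p_z W_z(p)) = p_i for every i, then p is an optimal schedule: cost_θ(p) ≤ cost_θ(q) for every schedule q. -/

import Mathlib

/-! Each summand of the cost is `π S · g(1 - p(S))` with `g x = 1 / (1 - θ xᶜ)` convex and increasing
on `[0, 1]`, so the cost is a convex function of `p` whose partial derivative in `p_i` is `-W_i(p)`.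
A fixed point of the update with positive entries has all `W_i(p)` equal, so the gradient is
orthogonal to every direction `q - p` inside the simplex; summing the tangent inequalities of the
summands gives `cost p ≤ cost q`. -/

open Finset

lemma mul_pow_mul_sub_le_pow_succ_sub_pow_succ (c : ℕ) {u v : ℝ} (hu : 0 ≤ u) (hv : 0 ≤ v) :
    ((c : ℝ) + 1) * u ^ c * (v - u) ≤ v ^ (c + 1) - u ^ (c + 1) := by
  induction c with
  | zero => simp
  | succ c ih =>
    simp only [pow_succ] at ih ⊢
    have h1 : v * (((c : ℝ) + 1) * u ^ c * (v - u)) ≤ v * (v ^ c * v - u ^ c * u) :=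
      mul_le_mul_of_nonneg_left ih hv
    have h2 : (0 : ℝ) ≤ ((c : ℝ) + 1) * u ^ c * (v - u) ^ 2 := by positivity
    push_cast
    nlinarith [h1, h2]

/-- The tangent-line inequality for the convex function `x ↦ w / (1 - θ xᶜ)` on `[0, 1]`. -/
lemma div_one_sub_mul_pow_add_deriv_mul_sub_le {θ w : ℝ} (hθ0 : 0 ≤ θ) (hθ1 : θ < 1)
    (hw : 0 ≤ w) (c : ℕ) {u v : ℝ} (hu0 : 0 ≤ u) (hu1 : u ≤ 1) (hv0 : 0 ≤ v) (hv1 : v ≤ 1) :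
    w / (1 - θ * u ^ c) + θ * c * w * u ^ (c - 1) / (1 - θ * u ^ c) ^ 2 * (v - u)
      ≤ w / (1 - θ * v ^ c) := by
  obtain _ | d := c
  · simp
  have hden : ∀ x : ℝ, 0 ≤ x → x ≤ 1 → 0 < 1 - θ * x ^ (d + 1) := fun x hx0 hx1 => by
    nlinarith [mul_le_of_le_one_right hθ0 (pow_le_one₀ (n := d + 1) hx0 hx1)]
  have ha := hden u hu0 hu1
  have hb := hden v hv0 hv1
  set a := 1 - θ * u ^ (d + 1)
  set b := 1 - θ * v ^ (d + 1)
  have hΔ := mul_pow_mul_sub_le_pow_succ_sub_pow_succ d hu0 hv0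
  set Δ := v ^ (d + 1) - u ^ (d + 1)
  -- `a - b = θ Δ`, and the `Δ² / (a² b)` defect is the convexity gap
  have hgap : θ * w * Δ / (a * b) - θ * w * Δ / a ^ 2 = θ ^ 2 * w * Δ ^ 2 / (a ^ 2 * b) := by
    field_simp
    ring
  calc w / a + θ * ↑(d + 1) * w * u ^ (d + 1 - 1) / a ^ 2 * (v - u)
      = w / a + θ * w * (((d : ℝ) + 1) * u ^ d * (v - u)) / a ^ 2 := by
        push_cast
        ring
    _ ≤ w / a + θ * w * Δ / a ^ 2 := by gcongr
    _ ≤ w / a + θ * w * Δ / (a * b) := by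
        have : 0 ≤ θ ^ 2 * w * Δ ^ 2 / (a ^ 2 * b) := by positivity
        linarith
    _ = w / b := by
        field_simp
        ring

lemma sum_mem_Icc_of_mem_stdSimplex {ι : Type*} [Fintype ι] {p : ι → ℝ}
    (hp : p ∈ stdSimplex ℝ ι) (S : Finset ι) : ∑ i ∈ S, p i ∈ Set.Icc 0 1 :=
  ⟨sum_nonneg fun i _ => hp.1 i,
    hp.2 ▸ sum_le_sum_of_subset_of_nonneg (subset_univ S) fun i _ _ => hp.1 i⟩

lemma sum_mul_sum_eq_sum_mul_sum_filter_mem {ι R : Type*} [Fintype ι] [DecidableEq ι]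
    [CommSemiring R] (F : Finset (Finset ι)) (D : Finset ι → R) (x : ι → R) :
    ∑ S ∈ F, D S * ∑ i ∈ S, x i = ∑ i, x i * ∑ S ∈ F with i ∈ S, D S := by
  simp_rw [mul_sum, mul_comm (x _)]
  exact sum_comm' fun S i => by simp

lemma eq_of_mul_div_eq_self {K : Type*} [Field K] {x w L : K} (hx : x ≠ 0) (hL : L ≠ 0)
    (h : x * w / L = x) : w = L := by
  rw [div_eq_iff hL] at h
  exact mul_left_cancel₀ hx h

theorem stmt11_general (n : ℕ) (θ : ℝ) (hθ : θ ∈ Set.Ioo (0 : ℝ) 1)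
    (c : ℕ) (F : Finset (Finset (Fin n)))
    (π : Finset (Fin n) → ℝ) (hπ : ∀ S ∈ F, 0 < π S)
    (cost : (Fin n → ℝ) → ℝ)
    (hcost : ∀ p, cost p = ∑ S ∈ F, π S / (1 - θ * (1 - ∑ i ∈ S, p i) ^ c))
    (W : (Fin n → ℝ) → Fin n → ℝ)
    (hW : ∀ p i, W p i = ∑ S ∈ F.filter (fun S => i ∈ S),
        θ * c * π S * (1 - ∑ j ∈ S, p j) ^ (c - 1)
          / (1 - θ * (1 - ∑ j ∈ S, p j) ^ c) ^ 2)
    (p : Fin n → ℝ) (hp : p ∈ stdSimplex ℝ (Fin n))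
    (hpos : ∀ i, 0 < p i) (hsum : 0 < ∑ z, p z * W p z)
    (hfix : ∀ i, p i * W p i / (∑ z, p z * W p z) = p i) :
    ∀ q ∈ stdSimplex ℝ (Fin n), cost p ≤ cost q := by
  intro q hq
  set L := ∑ z, p z * W p z
  have hW_const : ∀ i, W p i = L := fun i =>
    eq_of_mul_div_eq_self (hpos i).ne' hsum.ne' (hfix i)
  set D : Finset (Fin n) → ℝ := fun S => θ * c * π S * (1 - ∑ j ∈ S, p j) ^ (c - 1)
    / (1 - θ * (1 - ∑ j ∈ S, p j) ^ c) ^ 2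
  have hgrad : ∑ S ∈ F, D S * ∑ i ∈ S, (p i - q i) = 0 := by
    have hD_sum : ∀ i, ∑ S ∈ F with i ∈ S, D S = L := fun i => (hW p i).symm.trans (hW_const i)
    rw [sum_mul_sum_eq_sum_mul_sum_filter_mem]
    simp only [hD_sum, ← sum_mul, sum_sub_distrib, hp.2, hq.2, sub_self, zero_mul]
  have htangent : ∀ S ∈ F, π S / (1 - θ * (1 - ∑ i ∈ S, p i) ^ c)
      + D S * ∑ i ∈ S, (p i - q i) ≤ π S / (1 - θ * (1 - ∑ i ∈ S, q i) ^ c) := fun S hS => by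
    have hpS := sum_mem_Icc_of_mem_stdSimplex hp S
    have hqS := sum_mem_Icc_of_mem_stdSimplex hq S
    have := div_one_sub_mul_pow_add_deriv_mul_sub_le hθ.1.le hθ.2 (hπ S hS).le c
      (u := 1 - ∑ i ∈ S, p i) (v := 1 - ∑ i ∈ S, q i)
      (by linarith [hpS.2]) (by linarith [hpS.1]) (by linarith [hqS.2]) (by linarith [hqS.1])
    rwa [sub_sub_sub_cancel_left, ← sum_sub_distrib] at this
  rw [hcost, hcost]
  calc ∑ S ∈ F, π S / (1 - θ * (1 - ∑ i ∈ S, p i) ^ c)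
      = ∑ S ∈ F, (π S / (1 - θ * (1 - ∑ i ∈ S, p i) ^ c) + D S * ∑ i ∈ S, (p i - q i)) := by
        rw [sum_add_distrib, hgrad, add_zero]
    _ ≤ _ := sum_le_sum htangent

/-- If `p` is a schedule with all entries positive,
`Σ_z p_z W_z(p) > 0`, and the WIGGINS update leaves `p` unchanged, then `p` is an
optimal schedule: `cost_θ(p) ≤ cost_θ(q)` for every schedule `q`. -/
theorem stmt11 (n : ℕ) (hn : 1 ≤ n) (θ : ℝ) (hθ : θ ∈ Set.Ioo (0 : ℝ) 1)
    (c : ℕ) (hc : 1 ≤ c) (F : Finset (Finset (Fin n)))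
    (hF : ∀ S ∈ F, S.Nonempty)
    (π : Finset (Fin n) → ℝ) (hπ : ∀ S ∈ F, 0 < π S)
    (cost : (Fin n → ℝ) → ℝ)
    (hcost : ∀ p, cost p = ∑ S ∈ F, π S / (1 - θ * (1 - ∑ i ∈ S, p i) ^ c))
    (W : (Fin n → ℝ) → Fin n → ℝ)
    (hW : ∀ p i, W p i = ∑ S ∈ F.filter (fun S => i ∈ S),
        θ * c * π S * (1 - ∑ j ∈ S, p j) ^ (c - 1)
          / (1 - θ * (1 - ∑ j ∈ S, p j) ^ c) ^ 2)
    (p : Fin n → ℝ) (hp : p ∈ stdSimplex ℝ (Fin n))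
    (hpos : ∀ i, 0 < p i) (hsum : 0 < ∑ z, p z * W p z)
    (hfix : ∀ i, p i * W p i / (∑ z, p z * W p z) = p i) :
    ∀ q ∈ stdSimplex ℝ (Fin n), cost p ≤ cost q :=
  stmt11_general n θ hθ c F π hπ cost hcost W hW p hp hpos hsum hfix
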